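/- arXiv:2509.13297 — 2 statements merged into one kernel-verified Lean document; each statement's English description precedes it below -/
import Mathlib

section
/- Let Γ = ⟨σ⟩ be a group of prime order ℓ acting linearly on a k-vector space V with char k = ℓ. Let H be a finite group with σ acting on H by automorphisms such that H^σ = {e}, and suppose H acts linearly on V compatibly with σ, i.e., there is an action Π of H ⋊ Γ on V. If w ∈ V^σ satisfies Σ_{h ∈ H} Π(h)w = 0, then w ∈ Nr(V), i.e., w represents the zero class in Ĥ^0(Γ, V). -/
/-- The norm map `Nr = ∑_{i=0}^{ℓ-1} σ^i`. -/
abbrev tateNr (k : Type*) {V : Type*} [Field k] [AddCommGroup V] [Module k V]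
    (ℓ : ℕ) (f : Module.End k V) : Module.End k V :=
  ∑ i ∈ Finset.range ℓ, f ^ i

/-- Tate cohomology `Ĥ⁰(Γ, V) = V^σ / Nr(V)` for `Γ = ⟨σ⟩` of order `ℓ`,
where `σ` acts via the endomorphism `f`. -/
abbrev tateH0 (k : Type*) {V : Type*} [Field k] [AddCommGroup V] [Module k V]
    (ℓ : ℕ) (f : Module.End k V) :=
  ↥(LinearMap.ker ((1 : Module.End k V) - f)) ⧸
    (LinearMap.range (tateNr k ℓ f)).comap
      (LinearMap.ker ((1 : Module.End k V) - f)).subtype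

/-- Tate cohomology `Ĥ¹(Γ, V) = ker(Nr) / (1-σ)V`. -/
abbrev tateH1 (k : Type*) {V : Type*} [Field k] [AddCommGroup V] [Module k V]
    (ℓ : ℕ) (f : Module.End k V) :=
  ↥(LinearMap.ker (tateNr k ℓ f)) ⧸
    (LinearMap.range ((1 : Module.End k V) - f)).comap
      (LinearMap.ker (tateNr k ℓ f)).subtype

lemma aux_fix {H : Type*} [Group H] {ℓ : ℕ} (hl : ℓ.Prime) (σ : H ≃* H)
    (hord : σ ^ ℓ = 1) (hfix : ∀ h : H, σ h = h → h = 1)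
    {m : ℕ} (hm : ¬ ℓ ∣ m) {h : H} (hh : (σ ^ m) h = h) : h = 1 := by
  have hpos : 0 < ℓ := hl.pos
  set d := m % ℓ with hdd
  have hdlt : d < ℓ := Nat.mod_lt _ hpos
  have hd0 : d ≠ 0 := fun h0 => hm (Nat.dvd_of_mod_eq_zero h0)
  have hdh : (σ ^ d) h = h := by
    rw [hdd, ← pow_eq_pow_mod m hord]; exact hh
  have hcop : Nat.Coprime d ℓ :=
    ((hl.coprime_iff_not_dvd).2 fun hdvd => hd0 (Nat.eq_zero_of_dvd_of_lt hdvd hdlt)).symm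
  obtain ⟨c, -, hc⟩ := Nat.exists_mul_mod_eq_one_of_coprime hcop hl.one_lt
  have hiter : ∀ j : ℕ, ((σ ^ d) ^ j) h = h := by
    intro j
    induction j with
    | zero => simp
    | succ j ih =>
      rw [pow_succ]
      show ((σ ^ d) ^ j) ((σ ^ d) h) = h
      rw [hdh]; exact ih
  have hσ : σ h = h := by
    have h1 : (σ ^ (d * c)) h = h := by rw [pow_mul]; exact hiter c
    rwa [pow_eq_pow_mod (d * c) hord, hc, pow_one] at h1
  exact hfix h hσ

/-- Vanishing of `Ĥ⁰`-classes killed by the sum over a finite `p`-group `H`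
with `H^σ = {1}`: if `w ∈ V^σ` and `∑_{h ∈ H} Π(h)w = 0`, then `w ∈ Nr(V)`. -/
theorem stmt6 (k : Type*) {V : Type*} [Field k] [AddCommGroup V] [Module k V]
    {p ℓ : ℕ} (hp : p.Prime) (hl : ℓ.Prime) (hne : p ≠ ℓ) (hchar : CharP k ℓ)
    {H : Type*} [Group H] [Fintype H] {n : ℕ} (hcard : Fintype.card H = p ^ n)
    (σ : H ≃* H) (hordσ : σ ^ ℓ = 1) (hfix : ∀ h : H, σ h = h → h = 1)
    (ρ : Representation k H V)
    (f : Module.End k V) (hf : f ^ ℓ = 1)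
    (hcompat : ∀ (h : H) (v : V), f (ρ h v) = ρ (σ h) (f v))
    (w : V) (hw : f w = w) (hsum : ∑ h : H, ρ h w = 0) :
    w ∈ LinearMap.range (tateNr k ℓ f) := by
  classical
  have hpos : 0 < ℓ := hl.pos
  -- reverse powers
  have hrev : ∀ (i : ℕ) (a : H), (σ ^ (ℓ - i % ℓ)) ((σ ^ i) a) = a := by
    intro i a
    have hle : i % ℓ ≤ ℓ := le_of_lt (Nat.mod_lt _ hpos)
    have h1 : (σ ^ (ℓ - i % ℓ)) ((σ ^ i) a) = (σ ^ (ℓ - i % ℓ + i)) a := by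
      rw [pow_add]; rfl
    have h2 : (ℓ - i % ℓ + i) % ℓ = 0 := by
      rw [← Nat.add_mod_mod, Nat.sub_add_cancel hle, Nat.mod_self]
    rw [h1, pow_eq_pow_mod _ hordσ, h2, pow_zero]; rfl
  -- iterated compatibility
  have hcpow : ∀ (i : ℕ) (h : H), (f ^ i) (ρ h w) = ρ ((σ ^ i) h) w := by
    intro i
    induction i with
    | zero => intro h; simp
    | succ i ih =>
      intro h
      have e1 : (f ^ (i + 1)) (ρ h w) = (f ^ i) (f (ρ h w)) := by
        rw [pow_succ]; rfl
      have e2 : (σ ^ (i + 1)) h = (σ ^ i) (σ h) := by rw [pow_succ]; rfl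
      rw [e1, hcompat h w, hw, e2]
      exact ih (σ h)
  -- orbit sums are norms
  have horb : ∀ h : H, (∑ i ∈ Finset.range ℓ, ρ ((σ ^ i) h) w)
      = tateNr k ℓ f (ρ h w) := by
    intro h
    rw [tateNr, LinearMap.sum_apply]
    exact Finset.sum_congr rfl fun i _ => (hcpow i h).symm
  -- the setoid of σ-orbits
  let S : Setoid H := ⟨fun a b => ∃ i : ℕ, (σ ^ i) a = b,
    ⟨fun a => ⟨0, by simp⟩,
     fun {a b} h => by
       obtain ⟨i, hi⟩ := h
       exact ⟨ℓ - i % ℓ, by rw [← hi]; exact hrev i a⟩,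
     fun {a b c} h1 h2 => by
       obtain ⟨i, hi⟩ := h1
       obtain ⟨j, hj⟩ := h2
       refine ⟨j + i, ?_⟩
       rw [pow_add]
       show (σ ^ j) ((σ ^ i) a) = c
       rw [hi, hj]⟩⟩
  set A : Finset H := Finset.univ.erase (1 : H) with hA
  have hsplit : (ρ 1 w) + ∑ h ∈ A, ρ h w = ∑ h : H, ρ h w :=
    Finset.add_sum_erase Finset.univ (fun h => ρ h w) (Finset.mem_univ 1)
  have hρ1 : ρ (1 : H) w = w := by simp
  have hwu : w = -∑ h ∈ A, ρ h w := by
    have h0 := hsplit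
    rw [hρ1, hsum] at h0
    exact eq_neg_of_add_eq_zero_left h0
  have hu : (∑ h ∈ A, ρ h w) ∈ LinearMap.range (tateNr k ℓ f) := by
    rw [Finset.sum_partition S]
    apply Submodule.sum_mem
    intro q hq
    obtain ⟨a, haA, rfl⟩ := Finset.mem_image.1 hq
    have ha1 : a ≠ 1 := (Finset.mem_erase.1 haA).1
    -- the fiber is the orbit of a
    have hfib : (A.filter fun y => (⟦y⟧ : Quotient S) = ⟦a⟧)
        = (Finset.range ℓ).image fun i => (σ ^ i) a := by
      ext b
      simp only [Finset.mem_filter, Finset.mem_image, Finset.mem_range, hA,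
        Finset.mem_erase, Finset.mem_univ, and_true]
      constructor
      · rintro ⟨hb1, hbq⟩
        obtain ⟨i, hi⟩ : ∃ i : ℕ, (σ ^ i) b = a := Quotient.eq''.1 hbq
        refine ⟨(ℓ - i % ℓ) % ℓ, Nat.mod_lt _ hpos, ?_⟩
        rw [← pow_eq_pow_mod _ hordσ, ← hi]
        exact hrev i b
      · rintro ⟨i, hilt, rfl⟩
        constructor
        · intro hb1
          apply ha1
          have := hrev i a
          rw [hb1, map_one] at this
          exact this.symm
        · exact Quotient.sound ⟨ℓ - i % ℓ, hrev i a⟩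
    rw [hfib]
    have hinj : ∀ i ∈ Finset.range ℓ, ∀ j ∈ Finset.range ℓ,
        (σ ^ i) a = (σ ^ j) a → i = j := by
      have hkey : ∀ i j : ℕ, i < j → j < ℓ → (σ ^ i) a = (σ ^ j) a → False := by
        intro i j hij hjl heq
        have hil : i < ℓ := lt_trans hij hjl
        have h1 : (σ ^ (ℓ - i + j)) a = a := by
          have h2 : (σ ^ (ℓ - i + j)) a = (σ ^ (ℓ - i)) ((σ ^ j) a) := by
            rw [pow_add]; rfl
          rw [h2, ← heq]
          have := hrev i a
          rwa [Nat.mod_eq_of_lt hil] at this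
        have hnd : ¬ ℓ ∣ (ℓ - i + j) := by
          intro hdvd
          have heq2 : (ℓ - i + j) % ℓ = j - i := by
            have h3 : ℓ - i + j = ℓ + (j - i) := by omega
            rw [h3, Nat.add_mod_left, Nat.mod_eq_of_lt (by omega)]
          have h4 : (ℓ - i + j) % ℓ = 0 := Nat.eq_zero_of_dvd_of_lt ((Nat.dvd_mod_iff dvd_rfl).mpr hdvd) (Nat.mod_lt _ hpos)
          omega
        exact ha1 (aux_fix hl σ hordσ hfix hnd h1)
      intro i hi j hj heq
      rcases lt_trichotomy i j with h | h | h
      · exact absurd heq fun heq => hkey i j h (Finset.mem_range.1 hj) heq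
      · exact h
      · exact absurd heq.symm fun heq => hkey j i h (Finset.mem_range.1 hi) heq
    rw [Finset.sum_image hinj, horb a]
    exact LinearMap.mem_range_self _ _
  rw [hwu]
  exact Submodule.neg_mem _ hu
end

section
/- Let Γ = ⟨σ⟩ be a group of prime order ℓ acting on a k-vector space V (char k = ℓ), and let H be a finite group with a σ-action satisfying H^σ = {e}, acting on V compatibly with σ. If v ∈ V satisfies Nr(v) = Σ_{i=0}^{ℓ-1} σ^i(v) = 0 and Σ_{h ∈ H} Π(h)v = 0, then v ∈ (1 - σ)(V), i.e., v represents the zero class in Ĥ^1(Γ, V). -/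
/-- Vanishing of `Ĥ¹`-classes killed by the sum over a finite `p`-group `H`
with `H^σ = {1}`: if `Nr(v) = 0` and `∑_{h ∈ H} Π(h)v = 0`, then
`v ∈ (1 - σ)(V)`. -/
theorem stmt7 (k : Type*) {V : Type*} [Field k] [AddCommGroup V] [Module k V]
    {p ℓ : ℕ} (hp : p.Prime) (hl : ℓ.Prime) (hne : p ≠ ℓ) (hchar : CharP k ℓ)
    {H : Type*} [Group H] [Fintype H] {n : ℕ} (hcard : Fintype.card H = p ^ n)
    (σ : H ≃* H) (hordσ : σ ^ ℓ = 1) (hfix : ∀ h : H, σ h = h → h = 1)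
    (ρ : Representation k H V)
    (f : Module.End k V) (hf : f ^ ℓ = 1)
    (hcompat : ∀ (h : H) (v : V), f (ρ h v) = ρ (σ h) (f v))
    (v : V) (hv : tateNr k ℓ f v = 0) (hsum : ∑ h : H, ρ h v = 0) :
    v ∈ LinearMap.range ((1 : Module.End k V) - f) := by
  classical
  haveI : Fact ℓ.Prime := ⟨hl⟩
  set W := LinearMap.range ((1 : Module.End k V) - f) with hW
  let q : V →ₗ[k] V ⧸ W := W.mkQ
  have hlpos : 0 < ℓ := hl.pos
  -- `q` is unchanged under powers of `f`
  have hfpow : ∀ (i : ℕ) (u : V), q ((f ^ i) u) = q u := by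
    intro i u
    induction i with
    | zero => simp
    | succ i ih =>
      have hmem : (f ^ (i+1)) u - (f ^ i) u ∈ W := by
        refine ⟨-((f ^ i) u), ?_⟩
        rw [pow_succ' f, Module.End.mul_apply]
        simp only [LinearMap.sub_apply, Module.End.one_apply, map_neg]
        abel
      have h2 : q ((f ^ (i+1)) u) = q ((f ^ i) u) := (Submodule.Quotient.eq W).mpr hmem
      rw [h2, ih]
  -- compatibility for powers
  have hpc : ∀ (i : ℕ) (h : H) (u : V), (f ^ i) (ρ h u) = ρ ((σ ^ i) h) ((f ^ i) u) := by
    intro i h u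
    induction i with
    | zero => simp
    | succ i ih =>
      rw [pow_succ' f, pow_succ' σ, Module.End.mul_apply, ih, hcompat, MulAut.mul_apply,
        Module.End.mul_apply]
  -- orbit sums vanish in the quotient
  have horbit : ∀ x : H, ∑ i ∈ Finset.range ℓ, q (ρ ((σ ^ i) x) v) = 0 := by
    intro x
    have h1 : ∀ i ∈ Finset.range ℓ, q (ρ ((σ ^ i) x) v) = q (ρ x ((f ^ (ℓ - i)) v)) := by
      intro i hi
      have hile : i ≤ ℓ := le_of_lt (Finset.mem_range.mp hi)
      have hv' : (f ^ i) ((f ^ (ℓ - i)) v) = v := by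
        rw [← Module.End.mul_apply, ← pow_add, Nat.add_sub_cancel' hile, hf,
          Module.End.one_apply]
      calc q (ρ ((σ ^ i) x) v) = q (ρ ((σ ^ i) x) ((f ^ i) ((f ^ (ℓ - i)) v))) := by rw [hv']
        _ = q ((f ^ i) (ρ x ((f ^ (ℓ - i)) v))) := by rw [hpc]
        _ = q (ρ x ((f ^ (ℓ - i)) v)) := hfpow _ _
    rw [Finset.sum_congr rfl h1, ← map_sum, ← map_sum]
    have hz : ∑ i ∈ Finset.range ℓ, (f ^ (ℓ - i)) v = 0 := by
      have hrefl := Finset.sum_range_reflect (fun i => (f ^ (i+1)) v) ℓ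
      have hc : ∀ i ∈ Finset.range ℓ, (f ^ (ℓ - 1 - i + 1)) v = (f ^ (ℓ - i)) v := by
        intro i hi
        have hi' := Finset.mem_range.mp hi
        have harith : ℓ - 1 - i + 1 = ℓ - i := by omega
        rw [harith]
      rw [Finset.sum_congr rfl hc] at hrefl
      rw [hrefl]
      have h3 : ∑ i ∈ Finset.range ℓ, (f ^ (i+1)) v = f (∑ i ∈ Finset.range ℓ, (f ^ i) v) := by
        rw [map_sum]
        exact Finset.sum_congr rfl fun i _ => by rw [pow_succ' f, Module.End.mul_apply]
      rw [h3, ← LinearMap.sum_apply]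
      show f ((tateNr k ℓ f) v) = 0
      rw [hv, map_zero]
    rw [hz, map_zero, map_zero]
  -- an element fixed by a nontrivial power of σ is trivial
  have hstep : ∀ (y : H) (d : ℕ), 0 < d → d < ℓ → (σ ^ d) y = y → y = 1 := by
    intro y d hd0 hdl hy
    have hmul : ∀ a : ℕ, (σ ^ (d * a)) y = y := by
      intro a
      induction a with
      | zero => simp
      | succ a ih =>
        have h4 : σ ^ (d * (a+1)) = σ ^ (d * a) * σ ^ d := by rw [← pow_add]; ring_nf
        rw [h4, MulAut.mul_apply, hy, ih]
    -- find a multiplicative inverse of d mod ℓ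
    have hdz : (d : ZMod ℓ) ≠ 0 := by
      intro h0
      have hval : ((d : ZMod ℓ)).val = d := ZMod.val_cast_of_lt hdl
      rw [h0, ZMod.val_zero] at hval
      omega
    set a := ((d : ZMod ℓ)⁻¹).val with ha
    have hmod : (d * a) % ℓ = 1 % ℓ := by
      have hcast : ((d * a : ℕ) : ZMod ℓ) = ((1 : ℕ) : ZMod ℓ) := by
        push_cast
        rw [ha, ZMod.natCast_val, ZMod.cast_id]
        rw [mul_inv_cancel₀ hdz]
      exact (ZMod.natCast_eq_natCast_iff _ _ _).mp hcast
    have hone : (1 : ℕ) % ℓ = 1 := Nat.mod_eq_of_lt hl.one_lt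
    have hpow1 : σ ^ (d * a) = σ := by
      rw [pow_eq_pow_mod (d * a) hordσ, hmod, hone, pow_one]
    have : σ y = y := by rw [← hpow1]; exact hmul a
    exact hfix y this
  -- injectivity of i ↦ σ^i x on range ℓ for x ≠ 1
  have hinj : ∀ x : H, x ≠ 1 → ∀ i ∈ Finset.range ℓ, ∀ j ∈ Finset.range ℓ,
      (σ ^ i) x = (σ ^ j) x → i = j := by
    have key : ∀ x : H, x ≠ 1 → ∀ i j, i ≤ j → j < ℓ → (σ ^ i) x = (σ ^ j) x → i = j := by
      intro x hx i j hij hjl heq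
      by_contra hne'
      have hd0 : 0 < j - i := by omega
      have hdl : j - i < ℓ := by omega
      have h5 : (σ ^ (j - i)) ((σ ^ i) x) = (σ ^ i) x := by
        rw [← MulAut.mul_apply, ← pow_add, Nat.sub_add_cancel hij, ← heq]
      have h6 : (σ ^ i) x = 1 := hstep _ _ hd0 hdl h5
      have h7 : (σ ^ i) x = (σ ^ i) 1 := by rw [h6, map_one]
      exact hx ((σ ^ i).injective h7)
    intro x hx i hi j hj heq
    rcases le_total i j with h | h
    · exact key x hx i j h (Finset.mem_range.mp hj) heq
    · exact (key x hx j i h (Finset.mem_range.mp hi) heq.symm).symm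
  -- main induction: sums over σ-closed sets avoiding 1 vanish
  have main : ∀ s : Finset H, (1:H) ∉ s → (∀ h ∈ s, σ h ∈ s) →
      ∑ h ∈ s, q (ρ h v) = 0 := by
    intro s
    induction s using Finset.strongInduction with
    | _ s ih =>
      intro h1 hclosed
      rcases s.eq_empty_or_nonempty with rfl | ⟨x, hx⟩
      · simp
      · have hxne : x ≠ 1 := fun h => h1 (h ▸ hx)
        set O : Finset H := (Finset.range ℓ).image (fun i => (σ ^ i) x) with hO
        have hmem_pow : ∀ i : ℕ, (σ ^ i) x ∈ s := by
          intro i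
          induction i with
          | zero => simpa using hx
          | succ i ih' =>
            have : σ ((σ ^ i) x) ∈ s := hclosed _ ih'
            rwa [pow_succ' σ, MulAut.mul_apply]
        have hOsub : O ⊆ s := by
          intro y hy
          rcases Finset.mem_image.mp hy with ⟨i, _, rfl⟩
          exact hmem_pow i
        have hOne : O.Nonempty := ⟨x, Finset.mem_image.mpr ⟨0, Finset.mem_range.mpr hlpos, by simp⟩⟩
        have hssub : s \ O ⊂ s := Finset.sdiff_ssubset hOsub hOne
        have hOsum : ∑ h ∈ O, q (ρ h v) = 0 := by
          rw [hO, Finset.sum_image (hinj x hxne)]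
          exact horbit x
        have h1' : (1:H) ∉ s \ O := fun h => h1 (Finset.mem_sdiff.mp h).1
        have hclosed' : ∀ h ∈ s \ O, σ h ∈ s \ O := by
          intro h hh
          rcases Finset.mem_sdiff.mp hh with ⟨hhs, hhO⟩
          refine Finset.mem_sdiff.mpr ⟨hclosed _ hhs, fun hcon => hhO ?_⟩
          rcases Finset.mem_image.mp hcon with ⟨i, hi, heq⟩
          have h8 : h = (σ ^ (ℓ - 1)) (σ h) := by
            rw [← MulAut.mul_apply, ← pow_succ σ, Nat.sub_add_cancel hlpos, hordσ,
              MulAut.one_apply]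
          have h9 : h = (σ ^ ((ℓ - 1 + i) % ℓ)) x := by
            rw [h8, ← heq, ← MulAut.mul_apply, ← pow_add, pow_eq_pow_mod _ hordσ]
          exact Finset.mem_image.mpr ⟨(ℓ - 1 + i) % ℓ,
            Finset.mem_range.mpr (Nat.mod_lt _ hlpos), h9.symm⟩
        have hrest : ∑ h ∈ s \ O, q (ρ h v) = 0 := ih (s \ O) hssub h1' hclosed'
        have hsplit := Finset.sum_sdiff (f := fun h => q (ρ h v)) hOsub
        rw [← hsplit, hrest, hOsum, add_zero]
  -- conclude
  have hfinal : q v = 0 := by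
    have huniv : ∑ h : H, q (ρ h v) = 0 := by
      rw [← map_sum, hsum, map_zero]
    have herase : ∑ h ∈ Finset.univ.erase (1:H), q (ρ h v) = 0 := by
      refine main _ (Finset.notMem_erase _ _) ?_
      intro h hh
      rcases Finset.mem_erase.mp hh with ⟨hne1, _⟩
      refine Finset.mem_erase.mpr ⟨fun hcon => hne1 ?_, Finset.mem_univ _⟩
      have : σ h = σ 1 := by rw [hcon, map_one]
      exact σ.injective this
    have := Finset.sum_erase_add Finset.univ (fun h => q (ρ h v)) (Finset.mem_univ (1:H))
    rw [huniv, herase, zero_add] at this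
    have h10 : q (ρ (1:H) v) = 0 := this
    rwa [map_one, Module.End.one_apply] at h10
  rwa [show q = W.mkQ from rfl, Submodule.mkQ_apply, Submodule.Quotient.mk_eq_zero] at hfinal
end
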